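/- arXiv:2403.06578 — 2 statements merged into one kernel-verified Lean document; each statement's English description precedes it below -/
import Mathlib

section
/- There exists a constant C > 0 such that for every finitely supported function f : ℤ² → ℂ one has |Σ_{n∈ℤ²} conj(f(n)) · (Λ(n)·(A f)(n) − (A(Λ·f))(n))| ≤ C · Σ_{n∈ℤ²} Λ(n) |f(n)|², i.e. the commutator form ⟨f, [Λ(Q), A] f⟩ is bounded by C‖Λ^{1/2} f‖². -/
open scoped ENNReal
open Filter

noncomputable section

/-- The Hilbert space `ℓ²(ℤ², ℂ)`. -/
abbrev H2 : Type := lp (fun _ : ℤ × ℤ => ℂ) 2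

/-- The triangular-lattice Laplacian, acting pointwise on functions `ℤ² → ℂ`. -/
def lapT (f : ℤ × ℤ → ℂ) : ℤ × ℤ → ℂ := fun n =>
  (1/6 : ℂ) * (f (n.1 + 1, n.2) + f (n.1 - 1, n.2) + f (n.1, n.2 + 1)
    + f (n.1, n.2 - 1) + f (n.1 + 1, n.2 - 1) + f (n.1 - 1, n.2 + 1))

/-- The symbol `F(x₁,x₂) = (1/3)(cos x₁ + cos x₂ + cos (x₁ - x₂))`. -/
def symbF (x : ℝ × ℝ) : ℝ := (1/3) * (Real.cos x.1 + Real.cos x.2 + Real.cos (x.1 - x.2))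

/-- `∂₁ F`. -/
def d1F (x : ℝ × ℝ) : ℝ := -(1/3) * (Real.sin x.1 + Real.sin (x.1 - x.2))

/-- `∂₂ F`. -/
def d2F (x : ℝ × ℝ) : ℝ := -(1/3) * (Real.sin x.2 - Real.sin (x.1 - x.2))

/-- Japanese bracket `⟨t⟩ = √(1/2 + t²)`. -/
def jap (t : ℝ) : ℝ := Real.sqrt (1/2 + t^2)

/-- The weight `Λ(n₁,n₂) = ⟨n₁⟩ + ⟨n₂⟩`. -/
def Lam (n : ℤ × ℤ) : ℝ := jap (n.1 : ℝ) + jap (n.2 : ℝ)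

/-- The conjugate operator `A`, acting pointwise on functions `ℤ² → ℂ`. -/
def opA (f : ℤ × ℤ → ℂ) : ℤ × ℤ → ℂ := fun n =>
  (Complex.I / 6) *
    (((n.1 : ℂ) + 1/2) * f (n.1 + 1, n.2) - ((n.1 : ℂ) - 1/2) * f (n.1 - 1, n.2)
      + ((n.2 : ℂ) + 1/2) * f (n.1, n.2 + 1) - ((n.2 : ℂ) - 1/2) * f (n.1, n.2 - 1)
      + ((n.2 : ℂ) - (n.1 : ℂ) + 1) * f (n.1 - 1, n.2 + 1)
      + ((n.1 : ℂ) - (n.2 : ℂ) + 1) * f (n.1 + 1, n.2 - 1))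

/-- The perturbed Laplacian `Δ̃` with weight `m`, acting pointwise on functions `ℤ² → ℂ`:
`(Δ̃ f)(n) = (1/6) Σ_{l ∼ n} f(l) / (√(m n) √(m l))`. -/
def lapPert (m : ℤ × ℤ → ℝ) (f : ℤ × ℤ → ℂ) : ℤ × ℤ → ℂ := fun n =>
  (1/6 : ℂ) *
    (f (n.1 + 1, n.2) / ((Real.sqrt (m n) * Real.sqrt (m (n.1 + 1, n.2)) : ℝ) : ℂ)
      + f (n.1 - 1, n.2) / ((Real.sqrt (m n) * Real.sqrt (m (n.1 - 1, n.2)) : ℝ) : ℂ)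
      + f (n.1, n.2 + 1) / ((Real.sqrt (m n) * Real.sqrt (m (n.1, n.2 + 1)) : ℝ) : ℂ)
      + f (n.1, n.2 - 1) / ((Real.sqrt (m n) * Real.sqrt (m (n.1, n.2 - 1)) : ℝ) : ℂ)
      + f (n.1 + 1, n.2 - 1) / ((Real.sqrt (m n) * Real.sqrt (m (n.1 + 1, n.2 - 1)) : ℝ) : ℂ)
      + f (n.1 - 1, n.2 + 1) / ((Real.sqrt (m n) * Real.sqrt (m (n.1 - 1, n.2 + 1)) : ℝ) : ℂ))

/-!
`A` is a nearest-neighbour operator on the triangular lattice, `(A f)(n) = (i/6) Σₑ cₑ(n) f(n+e)`,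
whose coefficients grow linearly: `|cₑ(n)| ≤ 2Λ(n)`. In the commutator the coefficient `cₑ(n)`
becomes `cₑ(n)(Λ(n) - Λ(n+e))`, and `Λ` is Lipschitz (`⟨t⟩ = |√½ + it|`), so the commutator
still has coefficients `O(Λ(n))` rather than `O(Λ(n)²)`. Each of the six resulting correlation
sums `Σₙ Λ(n)|f(n)||f(n+e)|` is bounded by `2‖Λ^{1/2} f‖²` by AM-GM and `Λ(n) ≤ 3Λ(n+e)`.
-/

lemma jap_eq_norm (t : ℝ) : jap t = ‖(√(1/2) : ℂ) + t * Complex.I‖ := by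
  rw [Complex.norm_add_mul_I, Real.sq_sqrt (by norm_num), jap]

lemma abs_jap_sub_jap_le (a b : ℝ) : |jap a - jap b| ≤ |a - b| := by
  have h := abs_norm_sub_norm_le ((√(1/2) : ℂ) + a * Complex.I) ((√(1/2) : ℂ) + b * Complex.I)
  rwa [← jap_eq_norm, ← jap_eq_norm, add_sub_add_left_eq_sub, ← sub_mul, norm_mul,
    Complex.norm_I, mul_one, ← Complex.ofReal_sub, Complex.norm_real, Real.norm_eq_abs] at h

lemma abs_le_jap (t : ℝ) : |t| ≤ jap t :=
  Real.abs_le_sqrt (by linarith)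

lemma half_le_jap (t : ℝ) : 1/2 ≤ jap t :=
  (Real.le_sqrt (by norm_num) (by positivity)).2 (by linarith [sq_nonneg t])

lemma one_le_Lam (n : ℤ × ℤ) : 1 ≤ Lam n := by
  linarith [half_le_jap n.1, half_le_jap n.2, show Lam n = jap n.1 + jap n.2 from rfl]

lemma abs_Lam_sub_Lam_le (n m : ℤ × ℤ) :
    |Lam n - Lam m| ≤ |(n.1 : ℝ) - m.1| + |(n.2 : ℝ) - m.2| := by
  calc |Lam n - Lam m| = |(jap n.1 - jap m.1) + (jap n.2 - jap m.2)| := by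
        rw [Lam, Lam, add_sub_add_comm]
    _ ≤ |jap n.1 - jap m.1| + |jap n.2 - jap m.2| := abs_add_le _ _
    _ ≤ _ := add_le_add (abs_jap_sub_jap_le _ _) (abs_jap_sub_jap_le _ _)

lemma abs_add_abs_add_one_le_Lam (n : ℤ × ℤ) : |(n.1 : ℝ)| + |(n.2 : ℝ)| + 1 ≤ 2 * Lam n := by
  linarith [abs_le_jap n.1, abs_le_jap n.2, one_le_Lam n, show Lam n = jap n.1 + jap n.2 from rfl]

/-- The six neighbours of the origin in the triangular lattice. -/
def nbr : Fin 6 → ℤ × ℤ := ![(1, 0), (-1, 0), (0, 1), (0, -1), (-1, 1), (1, -1)]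

def coeffA (n : ℤ × ℤ) : Fin 6 → ℝ :=
  ![n.1 + 1/2, -(n.1 - 1/2), n.2 + 1/2, -(n.2 - 1/2), n.2 - n.1 + 1, n.1 - n.2 + 1]

lemma opA_eq_sum (f : ℤ × ℤ → ℂ) (n : ℤ × ℤ) :
    opA f n = Complex.I / 6 * ∑ i, (coeffA n i : ℂ) * f (n + nbr i) := by
  obtain ⟨a, b⟩ := n
  simp only [opA, coeffA, nbr, Fin.sum_univ_six, Matrix.cons_val, Prod.mk_add_mk, sub_eq_add_neg]
  push_cast
  ring_nf

lemma abs_coeffA_le (n : ℤ × ℤ) (i : Fin 6) : |coeffA n i| ≤ |(n.1 : ℝ)| + |(n.2 : ℝ)| + 1 := by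
  have h₁ := abs_nonneg (n.1 : ℝ)
  have h₂ := abs_nonneg (n.2 : ℝ)
  have := le_abs_self (n.1 : ℝ); have := neg_abs_le (n.1 : ℝ)
  have := le_abs_self (n.2 : ℝ); have := neg_abs_le (n.2 : ℝ)
  fin_cases i <;> simp only [coeffA] <;> refine abs_le.2 ⟨?_, ?_⟩ <;> push_cast <;> linarith

lemma abs_nbr_le (i : Fin 6) : |((nbr i).1 : ℝ)| ≤ 1 ∧ |((nbr i).2 : ℝ)| ≤ 1 := by
  fin_cases i <;> simp [nbr]

lemma commutator_eq_sum (f : ℤ × ℤ → ℂ) (n : ℤ × ℤ) :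
    (Lam n : ℂ) * opA f n - opA (fun k => (Lam k : ℂ) * f k) n
      = Complex.I / 6 *
          ∑ i, ((coeffA n i * (Lam n - Lam (n + nbr i)) : ℝ) : ℂ) * f (n + nbr i) := by
  rw [opA_eq_sum, opA_eq_sum, mul_left_comm, ← mul_sub, Finset.mul_sum, ← Finset.sum_sub_distrib]
  congr 1
  refine Finset.sum_congr rfl fun i _ => ?_
  push_cast
  ring

lemma abs_Lam_sub_Lam_add_nbr_le (n : ℤ × ℤ) (i : Fin 6) : |Lam n - Lam (n + nbr i)| ≤ 2 := by
  obtain ⟨h₁, h₂⟩ := abs_nbr_le i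
  have := abs_Lam_sub_Lam_le n (n + nbr i)
  simp only [Prod.fst_add, Prod.snd_add, Int.cast_add, sub_add_cancel_left, abs_neg] at this
  linarith

lemma Lam_le_three_mul_Lam_add_nbr (n : ℤ × ℤ) (i : Fin 6) : Lam n ≤ 3 * Lam (n + nbr i) := by
  linarith [(abs_le.1 (abs_Lam_sub_Lam_add_nbr_le n i)).2, one_le_Lam (n + nbr i)]

lemma norm_commutator_le (f : ℤ × ℤ → ℂ) (n : ℤ × ℤ) :
    ‖(Lam n : ℂ) * opA f n - opA (fun k => (Lam k : ℂ) * f k) n‖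
      ≤ ∑ i, 2 / 3 * Lam n * ‖f (n + nbr i)‖ := by
  have hterm (i : Fin 6) : |coeffA n i * (Lam n - Lam (n + nbr i))| ≤ 4 * Lam n := by
    rw [abs_mul]
    nlinarith [(abs_coeffA_le n i).trans (abs_add_abs_add_one_le_Lam n),
      abs_Lam_sub_Lam_add_nbr_le n i, abs_nonneg (coeffA n i)]
  rw [commutator_eq_sum, norm_mul, show ‖Complex.I / 6‖ = 1 / 6 by simp]
  calc 1 / 6 * ‖∑ i, ((coeffA n i * (Lam n - Lam (n + nbr i)) : ℝ) : ℂ) * f (n + nbr i)‖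
      ≤ 1 / 6 * ∑ i, |coeffA n i * (Lam n - Lam (n + nbr i))| * ‖f (n + nbr i)‖ := by
        gcongr
        refine (norm_sum_le _ _).trans_eq (Finset.sum_congr rfl fun i _ => ?_)
        rw [norm_mul, Complex.norm_real, Real.norm_eq_abs]
    _ ≤ 1 / 6 * ∑ i, 4 * Lam n * ‖f (n + nbr i)‖ := by gcongr with i; exact hterm i
    _ = ∑ i, 2 / 3 * Lam n * ‖f (n + nbr i)‖ := by
        rw [Finset.mul_sum]
        exact Finset.sum_congr rfl fun i _ => by ring

lemma summable_of_eq_zero_of_finite_support {α E : Type*} [Zero E] {f : α → E}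
    (hf : (Function.support f).Finite) {g : α → ℝ} (hg : ∀ n, f n = 0 → g n = 0) :
    Summable g :=
  summable_of_hasFiniteSupport (hf.subset fun n hn h0 => hn (hg n h0))

lemma tsum_mul_norm_mul_norm_add_le {G E : Type*} [AddCommGroup G] [SeminormedAddCommGroup E]
    {w : G → ℝ} {f : G → E} (hf : (Function.support f).Finite) (hw : ∀ n, 0 ≤ w n)
    {K : ℝ} (e : G) (hK : ∀ n, w n ≤ K * w (n + e)) :
    ∑' n, w n * (‖f n‖ * ‖f (n + e)‖) ≤ (1 + K) / 2 * ∑' n, w n * ‖f n‖ ^ 2 := by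
  have hS : Summable fun n => w n * ‖f n‖ ^ 2 :=
    summable_of_eq_zero_of_finite_support hf fun n h => by simp [h]
  have hS' : Summable fun n => w (n + e) * ‖f (n + e)‖ ^ 2 :=
    hS.comp_injective (add_left_injective e)
  have hshift : ∑' n, w (n + e) * ‖f (n + e)‖ ^ 2 = ∑' n, w n * ‖f n‖ ^ 2 :=
    (Equiv.addRight e).tsum_eq fun n => w n * ‖f n‖ ^ 2
  have hpt (n : G) : w n * (‖f n‖ * ‖f (n + e)‖)
      ≤ 1 / 2 * (w n * ‖f n‖ ^ 2) + K / 2 * (w (n + e) * ‖f (n + e)‖ ^ 2) := by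
    have amgm := mul_le_mul_of_nonneg_left (two_mul_le_add_sq ‖f n‖ ‖f (n + e)‖) (hw n)
    have hcmp := mul_le_mul_of_nonneg_right (hK n) (sq_nonneg ‖f (n + e)‖)
    linarith
  calc ∑' n, w n * (‖f n‖ * ‖f (n + e)‖)
      ≤ ∑' n, (1 / 2 * (w n * ‖f n‖ ^ 2) + K / 2 * (w (n + e) * ‖f (n + e)‖ ^ 2)) :=
        Summable.tsum_le_tsum hpt
          (summable_of_eq_zero_of_finite_support hf fun n h => by simp [h])
          ((hS.mul_left _).add (hS'.mul_left _))
    _ = (1 + K) / 2 * ∑' n, w n * ‖f n‖ ^ 2 := by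
        rw [(hS.mul_left _).tsum_add (hS'.mul_left _), tsum_mul_left, tsum_mul_left, hshift]
        ring

/-- the commutator form `⟨f, [Λ(Q), A] f⟩` is bounded by `C ‖Λ^{1/2} f‖²`. -/
theorem commutator_weight_opA_bound :
    ∃ C > 0, ∀ f : ℤ × ℤ → ℂ, (Function.support f).Finite →
      ‖(∑' n : ℤ × ℤ, (starRingEnd ℂ) (f n) *
          ((Lam n : ℂ) * opA f n - opA (fun k => (Lam k : ℂ) * f k) n))‖
        ≤ C * ∑' n : ℤ × ℤ, Lam n * ‖f n‖ ^ 2 := by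
  refine ⟨8, by norm_num, fun f hf => ?_⟩
  set S := ∑' n : ℤ × ℤ, Lam n * ‖f n‖ ^ 2
  set g : Fin 6 → ℤ × ℤ → ℝ := fun i n => 2 / 3 * (Lam n * (‖f n‖ * ‖f (n + nbr i)‖))
  have hg (i : Fin 6) : Summable (g i) :=
    summable_of_eq_zero_of_finite_support hf fun n h => by simp [g, h]
  have hpt (n : ℤ × ℤ) : ‖(starRingEnd ℂ) (f n) *
      ((Lam n : ℂ) * opA f n - opA (fun k => (Lam k : ℂ) * f k) n)‖ ≤ ∑ i, g i n := by
    rw [norm_mul, RCLike.norm_conj]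
    refine (mul_le_mul_of_nonneg_left (norm_commutator_le f n) (norm_nonneg _)).trans_eq ?_
    rw [Finset.mul_sum]
    exact Finset.sum_congr rfl fun i _ => by ring
  have hsum : Summable fun n : ℤ × ℤ => ‖(starRingEnd ℂ) (f n) *
      ((Lam n : ℂ) * opA f n - opA (fun k => (Lam k : ℂ) * f k) n)‖ :=
    summable_of_eq_zero_of_finite_support hf fun n h => by simp [h]
  have hcorr (i : Fin 6) : ∑' n, g i n ≤ 2 / 3 * ((1 + 3) / 2 * S) := by
    rw [tsum_mul_left]
    gcongr
    exact tsum_mul_norm_mul_norm_add_le hf (fun n => zero_le_one.trans (one_le_Lam n)) (nbr i)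
      (fun n => Lam_le_three_mul_Lam_add_nbr n i)
  calc _ ≤ ∑' n, ∑ i, g i n := (norm_tsum_le_tsum_norm hsum).trans
          (hsum.tsum_le_tsum hpt (summable_sum fun i _ => hg i))
    _ = ∑ i, ∑' n, g i n := Summable.tsum_finsetSum fun i _ => hg i
    _ ≤ ∑ _i : Fin 6, 2 / 3 * ((1 + 3) / 2 * S) := Finset.sum_le_sum fun i _ => hcorr i
    _ = 8 * S := by
        simp only [Finset.sum_const, Finset.card_univ, Fintype.card_fin, nsmul_eq_mul]
        ring
end
end

section
/- Let η : ℤ² → ℝ satisfy (H₀): inf_n η(n) > −1 and η(n) → 0 as |n| → ∞, set m := 1 + η, and let V : ℤ² → ℝ be bounded with V(n) → 0 as |n| → ∞. Then H̃ := Δ̃ + V(Q) is a bounded self-adjoint operator on ℓ²(ℤ²,ℂ), and H̃ − Δ_T is a compact operator. -/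
open scoped ENNReal
open Filter

noncomputable section

/-!
`Δ̃` and `Δ_T` are sums `∑ᵥ M(aᵥ) ∘ τᵥ` over the six lattice directions of multiplication
operators composed with translations `(τᵥ f)(n) = f (n + v)`, with weights
`aᵥ n = 1 / (6 √(m n) √(m (n + v)))` and `aᵥ = 1/6` respectively. These weights are real and
satisfy `a₋ᵥ (n + v) = aᵥ n`, so the adjoint `∑ᵥ τ₋ᵥ ∘ M(aᵥ)` reindexes to `Δ̃`. In
`Δ̃ + V(Q) - Δ_T` the weights become `aᵥ - 1/6` and `V`, which vanish at infinity because `η` and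
`V` do; a multiplication operator by such a sequence is a norm limit of finite-rank truncations,
hence compact.
-/

open scoped lp
open Topology

namespace lp

variable {ι κ 𝕜 : Type*} [RCLike 𝕜]

lemma memℓp_infty_of_norm_le {E : Type*} [NormedAddCommGroup E] {f : ι → E} (C : ℝ)
    (h : ∀ i, ‖f i‖ ≤ C) : Memℓp f ∞ :=
  memℓp_infty ⟨C, by rintro _ ⟨i, rfl⟩; exact h i⟩

lemma opNorm_le_of_norm_apply_le {A : ℓ²(ι, 𝕜) →L[𝕜] ℓ²(ι, 𝕜)} {C : ℝ} (hC : 0 ≤ C)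
    (h : ∀ f i, ‖A f i‖ ≤ C * ‖f i‖) : ‖A‖ ≤ C := by
  refine A.opNorm_le_bound hC fun f => ?_
  calc ‖A f‖ ≤ ‖(C : 𝕜) • f‖ :=
        lp.norm_mono two_ne_zero fun i => by
          simpa [lp.coeFn_smul, norm_smul, abs_of_nonneg hC] using h f i
    _ = C * ‖f‖ := by rw [norm_smul, RCLike.norm_ofReal, abs_of_nonneg hC]

def mulOp (a : ℓ^∞(ι, 𝕜)) : ℓ²(ι, 𝕜) →L[𝕜] ℓ²(ι, 𝕜) :=
  lp.holderL (p := ∞) (q := 2) 2 (fun _ => ContinuousLinearMap.mul 𝕜 𝕜)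
    (K := 1) (fun _ => ContinuousLinearMap.opNorm_mul_le 𝕜 𝕜) a

@[simp] lemma mulOp_apply (a : ℓ^∞(ι, 𝕜)) (f : ℓ²(ι, 𝕜)) (i : ι) :
    mulOp a f i = a i * f i := rfl

lemma mulOp_sub (a b : ℓ^∞(ι, 𝕜)) : mulOp (a - b) = mulOp a - mulOp b :=
  map_sub _ a b

lemma adjoint_mulOp (a : ℓ^∞(ι, 𝕜)) : (mulOp a).adjoint = mulOp (star a) := by
  refine ((ContinuousLinearMap.eq_adjoint_iff _ _).2 fun f g => ?_).symm
  simp only [lp.inner_eq_tsum, mulOp_apply, lp.coeFn_star, Pi.star_apply]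
  refine tsum_congr fun i => ?_
  simp only [RCLike.inner_apply, RCLike.star_def, map_mul, RCLike.conj_conj]
  ring

lemma isSelfAdjoint_mulOp {a : ℓ^∞(ι, 𝕜)} (ha : IsSelfAdjoint a) : IsSelfAdjoint (mulOp a) := by
  rw [ContinuousLinearMap.isSelfAdjoint_iff', adjoint_mulOp, ha.star_eq]

def truncMulOp [DecidableEq ι] (a : ι → 𝕜) (s : Finset ι) : ℓ²(ι, 𝕜) →L[𝕜] ℓ²(ι, 𝕜) :=
  ∑ k ∈ s, singleContinuousLinearMap 𝕜 (fun _ => 𝕜) 2 k ∘L (a k • evalCLM 𝕜 (fun _ => 𝕜) 2 k)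

lemma truncMulOp_apply [DecidableEq ι] (a : ι → 𝕜) (s : Finset ι) (f : ℓ²(ι, 𝕜)) (i : ι) :
    truncMulOp a s f i = if i ∈ s then a i * f i else 0 := by
  simp only [truncMulOp, FunLike.coe_sum, Finset.sum_apply, lp.coeFn_sum,
    ContinuousLinearMap.comp_apply, smul_apply, singleContinuousLinearMap_apply, lp.single_apply]
  simp [evalCLM, Finset.sum_pi_single]

lemma isCompactOperator_truncMulOp [DecidableEq ι] (a : ι → 𝕜) (s : Finset ι) :
    IsCompactOperator (truncMulOp a s) := by
  show truncMulOp a s ∈ compactOperator (RingHom.id 𝕜) ℓ²(ι, 𝕜) ℓ²(ι, 𝕜)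
  refine Submodule.sum_mem _ fun k _ => ?_
  exact (isCompactOperator_of_locallyCompactSpace_dom
    (a k • evalCLM 𝕜 (fun _ : ι => 𝕜) 2 k)).clm_comp (singleContinuousLinearMap 𝕜 (fun _ : ι => 𝕜) 2 k)

lemma isCompactOperator_mulOp {a : ℓ^∞(ι, 𝕜)} (ha : Tendsto a cofinite (𝓝 0)) :
    IsCompactOperator (mulOp a) := by
  classical
  refine isCompactOperator_of_tendsto (l := atTop) (F := truncMulOp a) ?_
    (Eventually.of_forall (isCompactOperator_truncMulOp a))
  refine Metric.tendsto_nhds.2 fun ε hε => ?_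
  have hε2 := half_pos hε
  have hlarge : {i | ε / 2 ≤ ‖a i‖}.Finite := by
    simpa using Metric.tendsto_nhds.1 ha (ε / 2) hε2
  filter_upwards [eventually_ge_atTop hlarge.toFinset] with s hs
  rw [dist_eq_norm']
  refine (opNorm_le_of_norm_apply_le hε2.le fun f i => ?_).trans_lt (half_lt_self hε)
  rw [sub_apply, lp.coeFn_sub, Pi.sub_apply, mulOp_apply, truncMulOp_apply]
  split_ifs with hi
  · rw [sub_self, _root_.norm_zero]
    positivity
  · rw [sub_zero, norm_mul]
    refine mul_le_mul_of_nonneg_right (not_le.1 fun h => hi (hs ?_)).le (norm_nonneg _)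
    simpa using h

lemma memℓp_comp_equiv (e : κ ≃ ι) (f : ℓ²(ι, 𝕜)) : Memℓp (f ∘ e) 2 :=
  memℓp_gen <| (e.summable_iff (f := fun i => ‖f i‖ ^ (2 : ℝ≥0∞).toReal)).2
    ((lp.memℓp f).summable (by norm_num))

lemma norm_comp_equiv (e : κ ≃ ι) (f : ℓ²(ι, 𝕜)) :
    ‖(⟨f ∘ e, memℓp_comp_equiv e f⟩ : ℓ²(κ, 𝕜))‖ = ‖f‖ := by
  have h2 : (0 : ℝ) < (2 : ℝ≥0∞).toReal := by norm_num
  rw [lp.norm_eq_tsum_rpow h2, lp.norm_eq_tsum_rpow h2]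
  congr 1
  exact e.tsum_eq (fun i => ‖f i‖ ^ (2 : ℝ≥0∞).toReal)

def compEquivCLM (e : κ ≃ ι) : ℓ²(ι, 𝕜) →L[𝕜] ℓ²(κ, 𝕜) :=
  LinearMap.mkContinuous
    { toFun := fun f => ⟨f ∘ e, memℓp_comp_equiv e f⟩
      map_add' := fun _ _ => rfl
      map_smul' := fun _ _ => rfl }
    1 fun f => (norm_comp_equiv e f).trans_le (one_mul _).ge

@[simp] lemma compEquivCLM_apply (e : κ ≃ ι) (f : ℓ²(ι, 𝕜)) (k : κ) :
    compEquivCLM e f k = f (e k) := rfl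

lemma adjoint_compEquivCLM (e : κ ≃ ι) :
    (compEquivCLM (𝕜 := 𝕜) e).adjoint = compEquivCLM e.symm := by
  refine ((ContinuousLinearMap.eq_adjoint_iff _ _).2 fun f g => ?_).symm
  simp only [lp.inner_eq_tsum, compEquivCLM_apply]
  rw [← e.tsum_eq]
  simp

section FiniteRange

variable {G : Type*} [AddGroup G]

def finiteRangeOp (S : Finset G) (a : G → ℓ^∞(G, 𝕜)) : ℓ²(G, 𝕜) →L[𝕜] ℓ²(G, 𝕜) :=
  ∑ v ∈ S, mulOp (a v) ∘L compEquivCLM (Equiv.addRight v)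

lemma finiteRangeOp_apply (S : Finset G) (a : G → ℓ^∞(G, 𝕜)) (f : ℓ²(G, 𝕜)) (n : G) :
    finiteRangeOp S a f n = ∑ v ∈ S, a v n * f (n + v) := by
  simp only [finiteRangeOp, FunLike.coe_sum, Finset.sum_apply, lp.coeFn_sum,
    ContinuousLinearMap.comp_apply, mulOp_apply, compEquivCLM_apply, Equiv.coe_addRight]

lemma finiteRangeOp_sub (S : Finset G) (a b : G → ℓ^∞(G, 𝕜)) :
    finiteRangeOp S a - finiteRangeOp S b = finiteRangeOp S (a - b) := by
  simp only [finiteRangeOp, ← Finset.sum_sub_distrib, ← ContinuousLinearMap.sub_comp, Pi.sub_apply,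
    mulOp_sub]

lemma isCompactOperator_finiteRangeOp {S : Finset G} {a : G → ℓ^∞(G, 𝕜)}
    (ha : ∀ v ∈ S, Tendsto (a v) cofinite (𝓝 0)) : IsCompactOperator (finiteRangeOp S a) := by
  show finiteRangeOp S a ∈ compactOperator (RingHom.id 𝕜) ℓ²(G, 𝕜) ℓ²(G, 𝕜)
  exact Submodule.sum_mem _ fun v hv =>
    (isCompactOperator_mulOp (ha v hv)).comp_clm (compEquivCLM (Equiv.addRight v))

/-- `ha` says that the kernel `K (n, n + v) = a v n` is Hermitian. -/
lemma isSelfAdjoint_finiteRangeOp {S : Finset G} {a : G → ℓ^∞(G, 𝕜)} (hS : ∀ v ∈ S, -v ∈ S)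
    (ha : ∀ v ∈ S, ∀ n, a (-v) (n + v) = star (a v n)) : IsSelfAdjoint (finiteRangeOp S a) := by
  rw [ContinuousLinearMap.isSelfAdjoint_iff', finiteRangeOp, map_sum]
  ext f n
  simp only [ContinuousLinearMap.adjoint_comp, adjoint_mulOp, adjoint_compEquivCLM,
    FunLike.coe_sum, Finset.sum_apply, lp.coeFn_sum, ContinuousLinearMap.comp_apply, mulOp_apply,
    compEquivCLM_apply, Equiv.coe_addRight, Equiv.addRight_symm, lp.coeFn_star, Pi.star_apply]
  refine Finset.sum_nbij' Neg.neg Neg.neg hS hS (fun v _ => neg_neg v) (fun v _ => neg_neg v)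
    fun v hv => ?_
  rw [← ha v hv, neg_add_cancel_right]

end FiniteRange

end lp

def triangularNbrs : Finset (ℤ × ℤ) := {(1, 0), (-1, 0), (0, 1), (0, -1), (1, -1), (-1, 1)}

lemma neg_mem_triangularNbrs : ∀ v ∈ triangularNbrs, -v ∈ triangularNbrs := by
  decide

lemma sum_triangularNbrs {M : Type*} [AddCommMonoid M] (g : ℤ × ℤ → M) :
    ∑ v ∈ triangularNbrs, g v =
      g (1, 0) + g (-1, 0) + g (0, 1) + g (0, -1) + g (1, -1) + g (-1, 1) := by
  simp [triangularNbrs, add_assoc]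

lemma lapT_eq_sum (f : ℤ × ℤ → ℂ) (n : ℤ × ℤ) :
    lapT f n = ∑ v ∈ triangularNbrs, 1 / 6 * f (n + v) := by
  obtain ⟨n₁, n₂⟩ := n
  simp only [sum_triangularNbrs, lapT, Prod.mk_add_mk, add_zero, ← sub_eq_add_neg]
  ring

def lapPertWeight (m : ℤ × ℤ → ℝ) (v n : ℤ × ℤ) : ℝ :=
  1 / (6 * (Real.sqrt (m n) * Real.sqrt (m (n + v))))

lemma lapPert_eq_sum (m : ℤ × ℤ → ℝ) (f : ℤ × ℤ → ℂ) (n : ℤ × ℤ) :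
    lapPert m f n = ∑ v ∈ triangularNbrs, (lapPertWeight m v n : ℂ) * f (n + v) := by
  obtain ⟨n₁, n₂⟩ := n
  simp only [sum_triangularNbrs, lapPert, lapPertWeight, Prod.mk_add_mk, add_zero, ← sub_eq_add_neg]
  push_cast
  ring

lemma lapPertWeight_neg (m : ℤ × ℤ → ℝ) (v n : ℤ × ℤ) :
    lapPertWeight m (-v) (n + v) = lapPertWeight m v n := by
  simp only [lapPertWeight, add_neg_cancel_right, mul_comm (Real.sqrt (m n))]

lemma abs_lapPertWeight_le {m : ℤ × ℤ → ℝ} {c : ℝ} (hc : 0 < c) (hm : ∀ n, c ≤ m n)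
    (v n : ℤ × ℤ) : |lapPertWeight m v n| ≤ 1 / (6 * c) := by
  have hsqrt : ∀ k, Real.sqrt c ≤ Real.sqrt (m k) := fun k => Real.sqrt_le_sqrt (hm k)
  have hprod : c ≤ Real.sqrt (m n) * Real.sqrt (m (n + v)) := by
    calc c = Real.sqrt c * Real.sqrt c := (Real.mul_self_sqrt hc.le).symm
      _ ≤ _ := mul_le_mul (hsqrt n) (hsqrt _) (Real.sqrt_nonneg _) (Real.sqrt_nonneg _)
  rw [lapPertWeight, abs_of_nonneg (by positivity)]
  gcongr

lemma tendsto_lapPertWeight {m : ℤ × ℤ → ℝ} (hm : Tendsto m cofinite (𝓝 1)) (v : ℤ × ℤ) :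
    Tendsto (lapPertWeight m v) cofinite (𝓝 (1 / 6)) := by
  have hshift : Tendsto (fun n => m (n + v)) cofinite (𝓝 1) :=
    hm.comp (Equiv.addRight v).injective.tendsto_cofinite
  have h := (tendsto_const_nhds (x := (1 : ℝ))).div ((hm.sqrt.mul hshift.sqrt).const_mul 6)
    (by norm_num)
  rwa [Real.sqrt_one, mul_one, mul_one] at h

def lapPertCoeff {m : ℤ × ℤ → ℝ} {c : ℝ} (hc : 0 < c) (hm : ∀ n, c ≤ m n) (v : ℤ × ℤ) :
    ℓ^∞(ℤ × ℤ, ℂ) :=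
  ⟨fun n => (lapPertWeight m v n : ℂ), lp.memℓp_infty_of_norm_le _ fun n => by
    simpa using abs_lapPertWeight_le hc hm v n⟩

lemma lapPertCoeff_neg_apply {m : ℤ × ℤ → ℝ} {c : ℝ} (hc : 0 < c) (hm : ∀ n, c ≤ m n)
    (v n : ℤ × ℤ) : lapPertCoeff hc hm (-v) (n + v) = star (lapPertCoeff hc hm v n) := by
  simp [lapPertCoeff, lapPertWeight_neg]

lemma tendsto_lapPertCoeff_sub {m : ℤ × ℤ → ℝ} {c : ℝ} (hc : 0 < c) (hm : ∀ n, c ≤ m n)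
    (hm1 : Tendsto m cofinite (𝓝 1)) (v : ℤ × ℤ) :
    Tendsto (lapPertCoeff hc hm v - (1 / 6 : ℂ) • 1 : ℓ^∞(ℤ × ℤ, ℂ)) cofinite (𝓝 0) := by
  have h := ((Complex.continuous_ofReal.tendsto _).comp (tendsto_lapPertWeight hm1 v)).sub_const
    (1 / 6 : ℂ)
  rw [Function.comp_def, Complex.ofReal_div, Complex.ofReal_one, Complex.ofReal_ofNat,
    sub_self] at h
  refine h.congr fun n => ?_
  show _ = lapPertCoeff hc hm v n - ((1 / 6 : ℂ) • (1 : ℓ^∞(ℤ × ℤ, ℂ))) n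
  rw [lp.coeFn_smul, lp.infty_coeFn_one, Pi.smul_apply, Pi.one_apply, smul_eq_mul, mul_one]
  rfl

lemma lapPert_eq_finiteRangeOp {m : ℤ × ℤ → ℝ} {c : ℝ} (hc : 0 < c) (hm : ∀ n, c ≤ m n)
    (f : ℓ²(ℤ × ℤ, ℂ)) (n : ℤ × ℤ) :
    lapPert m f n = lp.finiteRangeOp triangularNbrs (lapPertCoeff hc hm) f n := by
  rw [lapPert_eq_sum, lp.finiteRangeOp_apply]
  rfl

lemma lapT_eq_finiteRangeOp (f : ℓ²(ℤ × ℤ, ℂ)) (n : ℤ × ℤ) :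
    lapT f n = lp.finiteRangeOp triangularNbrs (fun _ => (1 / 6 : ℂ) • 1) f n := by
  simp [lapT_eq_sum, lp.finiteRangeOp_apply, lp.infty_coeFn_one]

/-- `H̃ = Δ̃ + V(Q)` is a bounded self-adjoint operator on `ℓ²(ℤ²,ℂ)`, and
`H̃ - Δ_T` is a compact operator. -/
theorem perturbed_hamiltonian_selfAdjoint_and_compact_difference (η : ℤ × ℤ → ℝ)
    (h0inf : ∃ c : ℝ, -1 < c ∧ ∀ n : ℤ × ℤ, c ≤ η n)
    (h0lim : Filter.Tendsto η Filter.cofinite (nhds 0))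
    (V : ℤ × ℤ → ℝ) (hVbdd : ∃ C : ℝ, ∀ n : ℤ × ℤ, |V n| ≤ C)
    (hV0 : Filter.Tendsto V Filter.cofinite (nhds 0)) :
    (∃ Ht : H2 →L[ℂ] H2, ∀ (f : H2) (n : ℤ × ℤ),
        Ht f n = lapPert (fun k => 1 + η k) (⇑f) n + (V n : ℂ) * f n) ∧
    ∀ Ht T : H2 →L[ℂ] H2,
      (∀ (f : H2) (n : ℤ × ℤ),
        Ht f n = lapPert (fun k => 1 + η k) (⇑f) n + (V n : ℂ) * f n) →
      (∀ (f : H2) (n : ℤ × ℤ), T f n = lapT (⇑f) n) →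
      IsSelfAdjoint Ht ∧ IsCompactOperator (⇑(Ht - T)) := by
  obtain ⟨c, hc, hηc⟩ := h0inf
  obtain ⟨C, hC⟩ := hVbdd
  have hc' : 0 < 1 + c := by linarith
  have hm : ∀ n, 1 + c ≤ 1 + η n := fun n => by linarith [hηc n]
  have hm1 : Tendsto (fun k => 1 + η k) cofinite (𝓝 1) := by
    simpa using h0lim.const_add 1
  set a := lapPertCoeff hc' hm
  set W : ℓ^∞(ℤ × ℤ, ℂ) := ⟨fun n => (V n : ℂ), lp.memℓp_infty_of_norm_le C (by simpa using hC)⟩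
  have hHt : ∀ (f : H2) n, (lp.finiteRangeOp triangularNbrs a + lp.mulOp W) f n =
      lapPert (fun k => 1 + η k) f n + V n * f n := fun f n => by
    rw [lapPert_eq_finiteRangeOp hc' hm]
    rfl
  refine ⟨⟨_, hHt⟩, fun Ht T hHt' hT => ?_⟩
  obtain rfl : Ht = lp.finiteRangeOp triangularNbrs a + lp.mulOp W :=
    ContinuousLinearMap.ext fun f => lp.ext <| funext fun n => (hHt' f n).trans (hHt f n).symm
  obtain rfl : T = lp.finiteRangeOp triangularNbrs (fun _ => (1 / 6 : ℂ) • 1) :=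
    ContinuousLinearMap.ext fun f => lp.ext <| funext fun n =>
      (hT f n).trans (lapT_eq_finiteRangeOp f n)
  refine ⟨(lp.isSelfAdjoint_finiteRangeOp neg_mem_triangularNbrs fun v _ n =>
    lapPertCoeff_neg_apply hc' hm v n).add (lp.isSelfAdjoint_mulOp ?_), ?_⟩
  · exact lp.ext <| funext fun n => Complex.conj_ofReal (V n)
  · rw [add_sub_right_comm, lp.finiteRangeOp_sub]
    refine (lp.isCompactOperator_finiteRangeOp fun v _ => ?_).add (lp.isCompactOperator_mulOp ?_)
    · exact tendsto_lapPertCoeff_sub hc' hm hm1 v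
    · have hW := (Complex.continuous_ofReal.tendsto 0).comp hV0
      rwa [Complex.ofReal_zero] at hW
end
end
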